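/- Let h(x) = −x log₂ x − (1−x) log₂(1−x) be the binary entropy function. If F = 1 and η ≥ 0.97, then the key rate r = 1 − 2·h(1/2 − η^7/2) is strictly positive. -/
import Mathlib


/-- Binary entropy function (base-2 logarithms). -/
noncomputable def binEnt (x : ℝ) : ℝ :=
  -x * Real.logb 2 x - (1 - x) * Real.logb 2 (1 - x)

lemma binEnt_lt_half (x : ℝ) (hx0 : 0 ≤ x) (hxA : x ≤ 0.096008577609435) :
    binEnt x < 1 / 2 := by
  obtain ⟨A, hAdef⟩ : ∃ A : ℝ, A = 0.096008577609435 := ⟨_, rfl⟩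
  rw [← hAdef] at hxA
  have hA0 : (0 : ℝ) < A := by rw [hAdef]; norm_num
  have hlog2l : (0.6931471803 : ℝ) < Real.log 2 := Real.log_two_gt_d9
  have hlog2u : Real.log 2 < 0.6931471808 := Real.log_two_lt_d9
  have hlog2pos : (0 : ℝ) < Real.log 2 := by linarith
  -- lower bound on log A
  have h16A : Real.log (16 * A) = 4 * Real.log 2 + Real.log A := by
    rw [Real.log_mul (by norm_num) (ne_of_gt hA0)]
    have h16 : (16 : ℝ) = 2 ^ 4 := by norm_num
    rw [h16, Real.log_pow]
    norm_num
  have hlogAlb : 0.3490164 - 4 * Real.log 2 ≤ Real.log A := by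
    have h1 : 1 - (16 * A)⁻¹ ≤ Real.log (16 * A) :=
      Real.one_sub_inv_le_log_of_pos (by positivity)
    have h2 : (16 * A)⁻¹ ≤ 0.6509836 := by
      rw [hAdef]
      rw [show (16 : ℝ) * 0.096008577609435 = 1.53613724175096 by norm_num]
      rw [show ((1.53613724175096 : ℝ))⁻¹ = 100000000000000/153613724175096 by norm_num]
      norm_num
    rw [h16A] at h1
    linarith
  -- second entropy term (in nats): -(1-x) log (1-x) ≤ x
  have h1x : (0 : ℝ) < 1 - x := by
    have : A < 1 := by rw [hAdef]; norm_num
    linarith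
  have hterm2 : -((1 - x) * Real.log (1 - x)) ≤ x := by
    have h1 : 1 - (1 - x)⁻¹ ≤ Real.log (1 - x) :=
      Real.one_sub_inv_le_log_of_pos h1x
    have h3 : (1 - x) * (1 - (1 - x)⁻¹) = -x := by
      field_simp
      ring
    have h4 := mul_le_mul_of_nonneg_left h1 h1x.le
    linarith [h3 ▸ h4]
  -- first entropy term (in nats)
  have hterm1 : -(x * Real.log x) ≤ x * (4 * Real.log 2 - 0.3490164) + A - x := by
    rcases eq_or_lt_of_le hx0 with h | hxpos
    · rw [← h]
      simp
      linarith
    · have hAx : Real.log A - Real.log x ≤ A / x - 1 := by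
        have := Real.log_le_sub_one_of_pos (show (0:ℝ) < A / x by positivity)
        rwa [Real.log_div (ne_of_gt hA0) (ne_of_gt hxpos)] at this
      have hmul : x * Real.log A - x * Real.log x ≤ A - x := by
        have h5 := mul_le_mul_of_nonneg_left hAx (le_of_lt hxpos)
        have h6 : x * (A / x - 1) = A - x := by field_simp
        nlinarith
      have hlogA : -Real.log A ≤ 4 * Real.log 2 - 0.3490164 := by linarith
      nlinarith [mul_le_mul_of_nonneg_left hlogA (le_of_lt hxpos)]
  -- total (in nats)
  have hN : -(x * Real.log x) - (1 - x) * Real.log (1 - x) < Real.log 2 / 2 := by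
    have hc : (0 : ℝ) ≤ 4 * Real.log 2 - 0.3490164 := by linarith
    have hxc : x * (4 * Real.log 2 - 0.3490164) ≤ A * (4 * Real.log 2 - 0.3490164) :=
      mul_le_mul_of_nonneg_right hxA hc
    have hfinal : A * (4 * Real.log 2 - 0.3490164) + A < Real.log 2 / 2 := by
      rw [hAdef]
      nlinarith
    linarith
  -- convert to binary entropy
  have hbin : binEnt x = (-(x * Real.log x) - (1 - x) * Real.log (1 - x)) / Real.log 2 := by
    unfold binEnt
    rw [Real.logb, Real.logb]
    ring
  rw [hbin, div_lt_iff₀ hlog2pos]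
  linarith

theorem positive_key_rate_no_decoherence (η : ℝ) (h0 : 0 ≤ η) (h1 : η ≤ 1)
    (h97 : 0.97 ≤ η) :
    0 < 1 - 2 * binEnt (1 / 2 - η ^ 7 / 2) := by
  have hη7l : (0.97 : ℝ) ^ 7 ≤ η ^ 7 := pow_le_pow_left₀ (by norm_num) h97 7
  have hη7u : η ^ 7 ≤ 1 := pow_le_one₀ h0 h1
  have key : binEnt (1 / 2 - η ^ 7 / 2) < 1 / 2 := by
    apply binEnt_lt_half
    · linarith
    · have : (0.096008577609435 : ℝ) = 1 / 2 - (0.97 : ℝ) ^ 7 / 2 := by norm_num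
      linarith
  linarith
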